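/- arXiv:2309.06201 — 4 statements merged into one kernel-verified Lean document; each statement's English description precedes it below -/
import Mathlib

section
/- Let p ≥ 1 and let s_p(u) = ∑_{k=1}^p (−1)^k t_k u^k with t_k = (1/4^k)·C(2k,k). Then there exist real numbers α₀, α₁, …, α_p with ∑_{k=0}^p |α_k| ≤ 1 such that, as an identity of polynomials in u, (u+1)·(s_p(u)² + 2·s_p(u)) + u = (∑_{k=0}^p α_k u^k)·u^{p+1}. -/
/-!
Put `f = 1 + s_p`, the degree-`p` truncation of `(1 + u)^(-1/2)`, so that the left-hand side is
`(1 + u) f² - 1`. The coefficient of `u^n` in `f²` is `(-1)^n T_n` with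
`T_n = ∑_{i+j=n, i,j ≤ p} t_i t_j`. Since `t_k = (-1)^k (-1/2 choose k)`, Chu–Vandermonde for
`(1 + u)^(-1/2) (1 + u)^(-1/2) = (1 + u)^(-1)` gives `T_n = 1` for `n ≤ p`, so `(1 + u) f² - 1`
has no coefficients below degree `p + 1`. Above, its coefficients are `±(T_{n-1} - T_n)`; as `t_k`
decreases, `T_n` decreases for `n ≥ p`, and it vanishes for `n > 2p`, so their absolute values
telescope to `T_p - T_{2p+1} = 1`.
-/

open scoped BigOperators

/-- The polynomial `s_p = ∑_{k=1}^p (−1)^k t_k X^k` with `t_k = C(2k,k)/4^k`. -/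
noncomputable def sPoly (p : ℕ) : Polynomial ℝ :=
  ∑ k ∈ Finset.Icc 1 p,
    Polynomial.C ((-1 : ℝ) ^ k * ((Nat.choose (2 * k) k : ℝ) / 4 ^ k)) * Polynomial.X ^ k

open Polynomial Finset

theorem Ring.succ_mul_choose_succ {K : Type*} [Field K] [CharZero K] (a : K) (n : ℕ) :
    (n + 1 : K) * Ring.choose a (n + 1) = (a - n) * Ring.choose a n := by
  rw [Ring.choose_eq_smul, Ring.choose_eq_smul, descPochhammer_succ_right, smeval_mul,
    smeval_sub, smeval_X, smeval_natCast]
  simp only [Nat.factorial_succ, Nat.cast_mul, Nat.cast_add, Nat.cast_one, mul_inv_rev, pow_one,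
    pow_zero, nsmul_eq_mul, mul_one, smul_eq_mul]
  field_simp

theorem Ring.choose_neg_one {R : Type*} [CommRing R] [BinomialRing R] (n : ℕ) :
    Ring.choose (-1 : R) n = (-1) ^ n := by
  rw [Ring.choose_neg, add_sub_cancel_left, Ring.choose_natCast, Nat.choose_self, Nat.cast_one,
    Units.smul_def]
  simp

theorem Ring.choose_neg_half {K : Type*} [Field K] [CharZero K] (n : ℕ) :
    Ring.choose (-2⁻¹ : K) n = (-1) ^ n * n.centralBinom / 4 ^ n := by
  induction n with
  | zero => simp
  | succ n ih =>
    have hcb : ((n + 1 : ℕ) : K) * (n + 1).centralBinom = 2 * (2 * n + 1) * n.centralBinom := by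
      exact_mod_cast congrArg (Nat.cast : ℕ → K) (Nat.succ_mul_centralBinom_succ n)
    push_cast at hcb
    apply mul_left_cancel₀ (Nat.cast_add_one_ne_zero n)
    rw [Ring.succ_mul_choose_succ, ih]
    linear_combination (-1) ^ n / 4 ^ (n + 1) * hcb

theorem Nat.sum_antidiagonal_centralBinom_mul (n : ℕ) :
    ∑ ij ∈ antidiagonal n, ij.1.centralBinom * ij.2.centralBinom = 4 ^ n := by
  have h := Ring.add_choose_eq (r := (-2⁻¹ : ℚ)) (s := -2⁻¹) n (Commute.all _ _)
  rw [show (-2⁻¹ + -2⁻¹ : ℚ) = -1 by norm_num, Ring.choose_neg_one] at h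
  have key : ∀ ij ∈ antidiagonal n, Ring.choose (-2⁻¹ : ℚ) ij.1 * Ring.choose (-2⁻¹) ij.2
      = (-1) ^ n / 4 ^ n * (ij.1.centralBinom * ij.2.centralBinom : ℕ) := by
    intro ij hij
    rw [Ring.choose_neg_half, Ring.choose_neg_half, ← mem_antidiagonal.mp hij, pow_add, pow_add]
    push_cast
    ring
  rw [sum_congr rfl key, ← mul_sum] at h
  have : ((∑ ij ∈ antidiagonal n, ij.1.centralBinom * ij.2.centralBinom : ℕ) : ℚ) = 4 ^ n := by
    field_simp at h
    rw [Nat.cast_sum, ← h]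
  exact_mod_cast this

theorem Polynomial.eq_sum_C_mul_X_pow_mul_X_pow {R : Type*} [Semiring R] {P : R[X]} {m d : ℕ}
    (hlow : ∀ n < m, P.coeff n = 0) (hdeg : P.natDegree < m + d) :
    P = (∑ k ∈ range d, C (P.coeff (m + k)) * X ^ k) * X ^ m := by
  ext n
  rw [coeff_mul_X_pow', finsetSum_coeff]
  simp only [coeff_C_mul_X_pow]
  split_ifs with hmn
  · rw [sum_ite_eq, Nat.add_sub_cancel' hmn]
    split_ifs with hnd
    · rfl
    · rw [mem_range] at hnd
      exact coeff_eq_zero_of_natDegree_lt (by omega)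
  · exact hlow n (by omega)

noncomputable def scaledCentralBinom (k : ℕ) : ℝ := (Nat.choose (2 * k) k : ℝ) / 4 ^ k

theorem scaledCentralBinom_nonneg (k : ℕ) : 0 ≤ scaledCentralBinom k := by
  unfold scaledCentralBinom; positivity

theorem scaledCentralBinom_succ_le (k : ℕ) :
    scaledCentralBinom (k + 1) ≤ scaledCentralBinom k := by
  have h := Nat.succ_mul_centralBinom_succ k
  have hle : (k + 1).centralBinom ≤ 4 * k.centralBinom :=
    Nat.le_of_mul_le_mul_left (by rw [h]; nlinarith) k.succ_pos
  simp only [scaledCentralBinom, ← Nat.centralBinom_eq_two_mul_choose, pow_succ]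
  rw [div_le_div_iff₀ (by positivity) (by positivity)]
  have : ((k + 1).centralBinom : ℝ) ≤ 4 * k.centralBinom := by exact_mod_cast hle
  nlinarith [pow_pos (by norm_num : (0 : ℝ) < 4) k]

theorem sum_antidiagonal_scaledCentralBinom_mul (n : ℕ) :
    ∑ ij ∈ antidiagonal n, scaledCentralBinom ij.1 * scaledCentralBinom ij.2 = 1 := by
  have h : ∀ ij ∈ antidiagonal n, scaledCentralBinom ij.1 * scaledCentralBinom ij.2
      = (ij.1.centralBinom * ij.2.centralBinom : ℕ) / 4 ^ n := by
    intro ij hij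
    simp only [scaledCentralBinom, ← Nat.centralBinom_eq_two_mul_choose,
      ← mem_antidiagonal.mp hij, pow_add]
    push_cast
    ring
  rw [sum_congr rfl h, ← sum_div, ← Nat.cast_sum, Nat.sum_antidiagonal_centralBinom_mul]
  simp

noncomputable def truncSqCoeff (p n : ℕ) : ℝ :=
  ∑ ij ∈ antidiagonal n,
    if ij.1 ≤ p ∧ ij.2 ≤ p then scaledCentralBinom ij.1 * scaledCentralBinom ij.2 else 0

theorem truncSqCoeff_of_le {p n : ℕ} (h : n ≤ p) : truncSqCoeff p n = 1 := by
  rw [← sum_antidiagonal_scaledCentralBinom_mul n, truncSqCoeff]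
  refine sum_congr rfl fun ij hij => if_pos ?_
  have := mem_antidiagonal.mp hij
  omega

theorem truncSqCoeff_of_lt {p n : ℕ} (h : 2 * p < n) : truncSqCoeff p n = 0 := by
  refine sum_eq_zero fun ij hij => if_neg ?_
  have := mem_antidiagonal.mp hij
  omega

theorem truncSqCoeff_succ_le {p n : ℕ} (h : p ≤ n) :
    truncSqCoeff p (n + 1) ≤ truncSqCoeff p n := by
  rw [truncSqCoeff, Nat.sum_antidiagonal_succ', if_neg (by omega), zero_add]
  refine sum_le_sum fun ij _ => ?_
  split_ifs with h₁ h₂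
  · exact mul_le_mul_of_nonneg_left (scaledCentralBinom_succ_le _) (scaledCentralBinom_nonneg _)
  · omega
  · exact mul_nonneg (scaledCentralBinom_nonneg _) (scaledCentralBinom_nonneg _)
  · rfl

theorem sum_range_truncSqCoeff_sub (p : ℕ) :
    ∑ k ∈ range (p + 1), (truncSqCoeff p (p + k) - truncSqCoeff p (p + (k + 1))) = 1 := by
  rw [sum_range_sub' (fun k => truncSqCoeff p (p + k)), add_zero, truncSqCoeff_of_le le_rfl,
    truncSqCoeff_of_lt (by omega), sub_zero]

noncomputable def invSqrtTrunc (p : ℕ) : ℝ[X] :=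
  ∑ k ∈ range (p + 1), C ((-1) ^ k * scaledCentralBinom k) * X ^ k

theorem sPoly_eq_invSqrtTrunc_sub_one (p : ℕ) : sPoly p = invSqrtTrunc p - 1 := by
  rw [invSqrtTrunc, range_eq_Ico, sum_eq_sum_Ico_succ_bot (by omega : 0 < p + 1), zero_add,
    Ico_add_one_right_eq_Icc]
  simp [sPoly, scaledCentralBinom]

theorem coeff_invSqrtTrunc (p k : ℕ) :
    (invSqrtTrunc p).coeff k = if k ≤ p then (-1) ^ k * scaledCentralBinom k else 0 := by
  simp only [invSqrtTrunc, finsetSum_coeff, coeff_C_mul_X_pow, sum_ite_eq, mem_range,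
    Nat.lt_succ_iff]

theorem coeff_invSqrtTrunc_sq (p n : ℕ) :
    (invSqrtTrunc p ^ 2).coeff n = (-1) ^ n * truncSqCoeff p n := by
  rw [sq, coeff_mul, truncSqCoeff, mul_sum]
  refine sum_congr rfl fun ij hij => ?_
  rw [coeff_invSqrtTrunc, coeff_invSqrtTrunc, ite_zero_mul_ite_zero, mul_ite, mul_zero,
    ← mem_antidiagonal.mp hij, pow_add]
  exact if_congr Iff.rfl (by ring) rfl

noncomputable def invSqrtTruncDefect (p : ℕ) : ℝ[X] := (X + 1) * invSqrtTrunc p ^ 2 - 1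

theorem coeff_invSqrtTruncDefect_zero (p : ℕ) : (invSqrtTruncDefect p).coeff 0 = 0 := by
  simp [invSqrtTruncDefect, mul_coeff_zero, coeff_invSqrtTrunc_sq, truncSqCoeff_of_le]

theorem coeff_invSqrtTruncDefect_succ (p m : ℕ) :
    (invSqrtTruncDefect p).coeff (m + 1) =
      (-1) ^ (m + 1) * (truncSqCoeff p (m + 1) - truncSqCoeff p m) := by
  rw [invSqrtTruncDefect, coeff_sub, coeff_one, if_neg m.succ_ne_zero, sub_zero, add_mul,
    one_mul, coeff_add, coeff_X_mul, coeff_invSqrtTrunc_sq, coeff_invSqrtTrunc_sq, pow_succ]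
  ring

theorem coeff_invSqrtTruncDefect_of_le {p n : ℕ} (h : n ≤ p) :
    (invSqrtTruncDefect p).coeff n = 0 := by
  cases n with
  | zero => exact coeff_invSqrtTruncDefect_zero p
  | succ m =>
    rw [coeff_invSqrtTruncDefect_succ, truncSqCoeff_of_le h, truncSqCoeff_of_le (by omega),
      sub_self, mul_zero]

theorem natDegree_invSqrtTruncDefect_le (p : ℕ) :
    (invSqrtTruncDefect p).natDegree ≤ 2 * p + 1 := by
  refine natDegree_le_iff_coeff_eq_zero.mpr fun n hn => ?_
  obtain ⟨m, rfl⟩ : ∃ m, n = m + 1 := ⟨n - 1, by omega⟩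
  rw [coeff_invSqrtTruncDefect_succ, truncSqCoeff_of_lt (by omega),
    truncSqCoeff_of_lt (by omega), sub_self, mul_zero]

theorem abs_coeff_invSqrtTruncDefect_succ {p m : ℕ} (h : p ≤ m) :
    |(invSqrtTruncDefect p).coeff (m + 1)| = truncSqCoeff p m - truncSqCoeff p (m + 1) := by
  rw [coeff_invSqrtTruncDefect_succ, abs_mul, abs_pow, abs_neg, abs_one, one_pow, one_mul,
    abs_sub_comm, abs_of_nonneg (sub_nonneg.mpr (truncSqCoeff_succ_le h))]

theorem sp_poly_identity_general (p : ℕ) :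
    ∃ α : ℕ → ℝ, (∑ k ∈ Finset.range (p + 1), |α k|) ≤ 1 ∧
      (Polynomial.X + 1) * ((sPoly p) ^ 2 + 2 * sPoly p) + Polynomial.X =
        (∑ k ∈ Finset.range (p + 1), Polynomial.C (α k) * Polynomial.X ^ k) *
          Polynomial.X ^ (p + 1) := by
  refine ⟨fun k => (invSqrtTruncDefect p).coeff (p + 1 + k), le_of_eq ?_, ?_⟩
  · calc ∑ k ∈ range (p + 1), |(invSqrtTruncDefect p).coeff (p + 1 + k)|
        = ∑ k ∈ range (p + 1), (truncSqCoeff p (p + k) - truncSqCoeff p (p + (k + 1))) :=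
          sum_congr rfl fun k _ => by
            rw [add_right_comm, abs_coeff_invSqrtTruncDefect_succ (Nat.le_add_right p k),
              add_assoc]
      _ = 1 := sum_range_truncSqCoeff_sub p
  · have hdefect : (X + 1) * (sPoly p ^ 2 + 2 * sPoly p) + X = invSqrtTruncDefect p := by
      rw [sPoly_eq_invSqrtTrunc_sub_one, invSqrtTruncDefect]
      ring
    rw [hdefect]
    exact eq_sum_C_mul_X_pow_mul_X_pow (fun n hn => coeff_invSqrtTruncDefect_of_le (by omega))
      (by have := natDegree_invSqrtTruncDefect_le p; omega)

/-- Lemma 3.4: `(u+1)(s_p(u)² + 2 s_p(u)) + u = (∑_{k=0}^p α_k u^k) u^{p+1}`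
with `∑ |α_k| ≤ 1`. -/
theorem sp_poly_identity (p : ℕ) (hp : 1 ≤ p) :
    ∃ α : ℕ → ℝ, (∑ k ∈ Finset.range (p + 1), |α k|) ≤ 1 ∧
      (Polynomial.X + 1) * ((sPoly p) ^ 2 + 2 * sPoly p) + Polynomial.X =
        (∑ k ∈ Finset.range (p + 1), Polynomial.C (α k) * Polynomial.X ^ k) *
          Polynomial.X ^ (p + 1) :=
  sp_poly_identity_general p
end

section
/- Let ε ≥ 0, w ≥ 0, and a, b > 0. Let Σ ∈ ℂ^{ℓ×q} be diagonal with pairwise distinct positive diagonal entries, κ = κ(Σ), K = K(Σ). Let Δ ∈ ℂ^{ℓ×q}, let Ω ∈ ℂ^{ℓ×ℓ} be Hermitian and Λ ∈ ℂ^{q×q}, and set Δ₁ = (I_ℓ+Ω)(Δ+Σ)(I_q+Λ) − Σ. If ‖Δ‖ ≤ ε/(κ^a K^b) and ‖Ω‖, ‖Λ‖ ≤ wε/(κ^a K^{b+1}), then ‖Δ₁‖ ≤ ((1+wε)² + 2w + w²ε)·ε/(κ^a K^b). -/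
open Matrix Filter
open scoped BigOperators ComplexOrder

/-- Row-sum norm `‖A‖₁ = max_i ∑_j |A i j|`. -/
noncomputable def rowNorm {a b : ℕ} (A : Matrix (Fin a) (Fin b) ℂ) : ℝ :=
  ⨆ i, ∑ j, ‖A i j‖

/-- The matrix norm `‖A‖ = max (‖A‖₁, ‖Aᴴ‖₁)` used throughout. -/
noncomputable def mnorm {a b : ℕ} (A : Matrix (Fin a) (Fin b) ℂ) : ℝ :=
  max (rowNorm A) (rowNorm Aᴴ)

/-- The `ℓ × q` diagonal matrix with real diagonal entries `σ`. -/
noncomputable def diagMat (l q : ℕ) (σ : Fin q → ℝ) : Matrix (Fin l) (Fin q) ℂ :=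
  fun i j => if (i : ℕ) = (j : ℕ) then (σ j : ℂ) else 0

/-- `κ(Σ) = max (1, max_i 1/σ_i, max_{i≠j} (1/|σ_i−σ_j| + 1/(σ_i+σ_j)))`. -/
noncomputable def kappa {q : ℕ} (σ : Fin q → ℝ) : ℝ :=
  max 1 (max (⨆ i, 1 / σ i)
    (⨆ i, ⨆ j, if i ≠ j then 1 / |σ i - σ j| + 1 / (σ i + σ j) else 0))

/-- `K(Σ) = max (1, max_i σ_i)`. -/
noncomputable def Kbig {q : ℕ} (σ : Fin q → ℝ) : ℝ :=
  max 1 (⨆ i, σ i)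

/-!
Writing `X = Δ + Σ`, one has `Δ₁ = Δ + Ω X + X Λ + Ω X Λ`. The norm `max (‖A‖₁, ‖Aᴴ‖₁)` is
subadditive and submultiplicative, because `‖·‖₁` is the `ℓ^∞` operator norm, and `‖Σ‖ ≤ K`; so
`‖Δ₁‖ ≤ (1 + ω) (δ + K) (1 + ω) - K` for `δ = ε / (κ^a K^b)` and `ω = w ε / (κ^a K^(b+1))`.
The extra factor `K` in `ω` makes `ω K = w δ`, and `κ^a K^(b+1) ≥ 1` gives `ω ≤ w ε`.
-/

theorem Fin.sum_ite_val_eq_le {n : ℕ} (k : ℕ) (f : Fin n → ℝ) {c : ℝ} (hc : 0 ≤ c)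
    (hf : ∀ j, f j ≤ c) : ∑ j : Fin n, (if k = (j : ℕ) then f j else 0) ≤ c := by
  rw [← Finset.sum_filter]
  set J := Finset.univ.filter fun j : Fin n => k = j
  have hJ : J.card ≤ 1 := Finset.card_le_one.2 fun i hi j hj =>
    Fin.ext ((Finset.mem_filter.1 hi).2.symm.trans (Finset.mem_filter.1 hj).2)
  calc ∑ j ∈ J, f j ≤ J.card • c := Finset.sum_le_card_nsmul _ _ _ fun j _ => hf j
    _ ≤ c := by
      rw [nsmul_eq_mul]
      exact mul_le_of_le_one_left hc (by exact_mod_cast hJ)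

section LinftyOpNorm

attribute [local instance] Matrix.linftyOpNormedAddCommGroup

variable {m n p : ℕ}

theorem rowNorm_eq_norm (A : Matrix (Fin m) (Fin n) ℂ) : rowNorm A = ‖A‖ := by
  simp [linfty_opNorm_def, rowNorm, Finset.sup_univ_eq_ciSup, NNReal.coe_iSup]

theorem mnorm_eq_max_norm (A : Matrix (Fin m) (Fin n) ℂ) : mnorm A = max ‖A‖ ‖Aᴴ‖ := by
  rw [mnorm, rowNorm_eq_norm, rowNorm_eq_norm]

theorem mnorm_nonneg (A : Matrix (Fin m) (Fin n) ℂ) : 0 ≤ mnorm A :=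
  (mnorm_eq_max_norm A).symm ▸ (norm_nonneg A).trans (le_max_left _ _)

theorem mnorm_add_le (A B : Matrix (Fin m) (Fin n) ℂ) : mnorm (A + B) ≤ mnorm A + mnorm B := by
  simp only [mnorm_eq_max_norm, conjTranspose_add]
  exact max_le ((norm_add_le A B).trans (add_le_add (le_max_left _ _) (le_max_left _ _)))
    ((norm_add_le Aᴴ Bᴴ).trans (add_le_add (le_max_right _ _) (le_max_right _ _)))

theorem mnorm_mul_le (A : Matrix (Fin m) (Fin n) ℂ) (B : Matrix (Fin n) (Fin p) ℂ) :
    mnorm (A * B) ≤ mnorm A * mnorm B := by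
  simp only [mnorm_eq_max_norm, conjTranspose_mul]
  refine max_le ((linfty_opNorm_mul A B).trans ?_) ((linfty_opNorm_mul Bᴴ Aᴴ).trans ?_)
  · gcongr <;> first | positivity | exact le_max_left _ _
  · rw [mul_comm]
    gcongr <;> first | positivity | exact le_max_right _ _

end LinftyOpNorm

theorem mnorm_diagMat_le {m n : ℕ} (σ : Fin n → ℝ) {c : ℝ} (hc : 0 ≤ c) (hσ : ∀ j, |σ j| ≤ c) :
    mnorm (diagMat m n σ) ≤ c := by
  refine max_le (Real.iSup_le (fun i => ?_) hc) (Real.iSup_le (fun j => ?_) hc)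
  · convert Fin.sum_ite_val_eq_le i (fun j => |σ j|) hc hσ using 2 with j
    simp only [diagMat]; split_ifs <;> simp
  · convert Fin.sum_ite_val_eq_le j (fun _ => |σ j|) hc (fun _ => hσ j) using 2 with i
    simp only [diagMat, conjTranspose_apply, eq_comm (a := (j : ℕ))]
    split_ifs <;> simp

theorem mnorm_perturbation_sub_le {m n : ℕ} {Δ S : Matrix (Fin m) (Fin n) ℂ}
    {Ω : Matrix (Fin m) (Fin m) ℂ} {Λ : Matrix (Fin n) (Fin n) ℂ} {δ s ω ω' : ℝ}
    (hΔ : mnorm Δ ≤ δ) (hS : mnorm S ≤ s) (hΩ : mnorm Ω ≤ ω) (hΛ : mnorm Λ ≤ ω') :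
    mnorm ((1 + Ω) * (Δ + S) * (1 + Λ) - S) ≤ (1 + ω) * (δ + s) * (1 + ω') - s := by
  set X := Δ + S
  have hX : mnorm X ≤ δ + s := (mnorm_add_le Δ S).trans (add_le_add hΔ hS)
  have hω : 0 ≤ ω := (mnorm_nonneg Ω).trans hΩ
  have hΩX : mnorm (Ω * X) ≤ ω * (δ + s) :=
    (mnorm_mul_le Ω X).trans (mul_le_mul hΩ hX (mnorm_nonneg X) hω)
  have hXΛ : mnorm (X * Λ) ≤ (δ + s) * ω' :=
    (mnorm_mul_le X Λ).trans (mul_le_mul hX hΛ (mnorm_nonneg Λ) ((mnorm_nonneg X).trans hX))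
  have hΩXΛ : mnorm (Ω * X * Λ) ≤ ω * (δ + s) * ω' :=
    (mnorm_mul_le _ Λ).trans (mul_le_mul hΩX hΛ (mnorm_nonneg Λ) ((mnorm_nonneg _).trans hΩX))
  have hexpand : (1 + Ω) * X * (1 + Λ) - S = Δ + Ω * X + X * Λ + Ω * X * Λ := by
    simp only [Matrix.add_mul, Matrix.mul_add, Matrix.one_mul, Matrix.mul_one, X]
    abel
  calc mnorm ((1 + Ω) * X * (1 + Λ) - S)
      ≤ mnorm Δ + mnorm (Ω * X) + mnorm (X * Λ) + mnorm (Ω * X * Λ) := by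
        rw [hexpand]
        exact (mnorm_add_le _ _).trans (add_le_add_left
          ((mnorm_add_le _ _).trans (add_le_add_left (mnorm_add_le _ _) _)) _)
    _ ≤ δ + ω * (δ + s) + (δ + s) * ω' + ω * (δ + s) * ω' := by gcongr
    _ = (1 + ω) * (δ + s) * (1 + ω') - s := by ring

theorem le_Kbig {q : ℕ} (σ : Fin q → ℝ) (i : Fin q) : σ i ≤ Kbig σ :=
  (le_ciSup (Set.finite_range σ).bddAbove i).trans (le_max_right _ _)

theorem delta1_bound_general {l q : ℕ} (ε w a b : ℝ)
    (hε : 0 ≤ ε) (hw : 0 ≤ w) (ha : 0 < a) (hb : 0 < b)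
    (σ : Fin q → ℝ) (hpos : ∀ i, 0 < σ i)
    (Δ : Matrix (Fin l) (Fin q) ℂ) (Ω : Matrix (Fin l) (Fin l) ℂ)
    (Λ : Matrix (Fin q) (Fin q) ℂ)
    (hΔ : mnorm Δ ≤ ε / (kappa σ ^ a * Kbig σ ^ b))
    (hΩ : mnorm Ω ≤ w * ε / (kappa σ ^ a * Kbig σ ^ (b + 1)))
    (hΛ : mnorm Λ ≤ w * ε / (kappa σ ^ a * Kbig σ ^ (b + 1))) :
    mnorm ((1 + Ω) * (Δ + diagMat l q σ) * (1 + Λ) - diagMat l q σ) ≤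
      ((1 + w * ε) ^ 2 + 2 * w + w ^ 2 * ε) * ε / (kappa σ ^ a * Kbig σ ^ b) := by
  set K := Kbig σ
  have hK1 : 1 ≤ K := le_max_left _ _
  have hK : 0 < K := one_pos.trans_le hK1
  set D := kappa σ ^ a * K ^ b with hD
  set δ := ε / D with hδ
  set ω := w * ε / (kappa σ ^ a * K ^ (b + 1)) with hω
  have hD1 : 1 ≤ D := one_le_mul_of_one_le_of_one_le
    (Real.one_le_rpow (le_max_left _ _) ha.le) (Real.one_le_rpow hK1 hb.le)
  have hDK : kappa σ ^ a * K ^ (b + 1) = D * K := by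
    rw [Real.rpow_add_one hK.ne', hD, mul_assoc]
  have hωK : ω * K = w * δ := by
    rw [hω, hδ, hDK]; field_simp
  have hω_le : ω ≤ w * ε := by
    rw [hω, hDK]; exact div_le_self (by positivity) (one_le_mul_of_one_le_of_one_le hD1 hK1)
  have hS : mnorm (diagMat l q σ) ≤ K :=
    mnorm_diagMat_le σ hK.le fun j => (abs_of_pos (hpos j)).trans_le (le_Kbig σ j)
  have hδ0 : 0 ≤ δ := div_nonneg hε (zero_le_one.trans hD1)
  calc _ ≤ (1 + ω) * (δ + K) * (1 + ω) - K := mnorm_perturbation_sub_le hΔ hS hΩ hΛ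
    _ = (1 + ω) ^ 2 * δ + (2 + ω) * (ω * K) := by ring
    _ = (1 + ω) ^ 2 * δ + (2 + ω) * w * δ := by rw [hωK]; ring
    _ ≤ (1 + w * ε) ^ 2 * δ + (2 + w * ε) * w * δ := by
        have hω0 : 0 ≤ ω := (mnorm_nonneg Ω).trans hΩ
        gcongr
    _ = _ := by rw [hδ]; ring

/-- Proposition 6.1: bound on `Δ₁ = (I+Ω)(Δ+Σ)(I+Λ) − Σ`. -/
theorem delta1_bound {l q : ℕ} (hlq : q ≤ l) (ε w a b : ℝ)
    (hε : 0 ≤ ε) (hw : 0 ≤ w) (ha : 0 < a) (hb : 0 < b)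
    (σ : Fin q → ℝ) (hpos : ∀ i, 0 < σ i) (hdist : ∀ i j, i ≠ j → σ i ≠ σ j)
    (Δ : Matrix (Fin l) (Fin q) ℂ) (Ω : Matrix (Fin l) (Fin l) ℂ)
    (Λ : Matrix (Fin q) (Fin q) ℂ) (hΩH : Ωᴴ = Ω)
    (hΔ : mnorm Δ ≤ ε / (kappa σ ^ a * Kbig σ ^ b))
    (hΩ : mnorm Ω ≤ w * ε / (kappa σ ^ a * Kbig σ ^ (b + 1)))
    (hΛ : mnorm Λ ≤ w * ε / (kappa σ ^ a * Kbig σ ^ (b + 1))) :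
    mnorm ((1 + Ω) * (Δ + diagMat l q σ) * (1 + Λ) - diagMat l q σ) ≤
      ((1 + w * ε) ^ 2 + 2 * w + w ^ 2 * ε) * ε / (kappa σ ^ a * Kbig σ ^ b) :=
  delta1_bound_general ε w a b hε hw ha hb σ hpos Δ Ω Λ hΔ hΩ hΛ
end

section
/- Let Σ ∈ ℂ^{ℓ×q} be diagonal with pairwise distinct positive diagonal entries σ₁,…,σ_q, and set κ = κ(Σ), K = K(Σ). Let α, ε ≥ 0 with 1 − 8αε > 0 and put c = 1/(1 − 4αε). If Σ' ∈ ℂ^{ℓ×q} is diagonal with real diagonal entries and ‖Σ' − Σ‖ ≤ 2αcε/κ, then the diagonal entries of Σ' are positive and pairwise distinct, K − 2αcε ≤ K(Σ') ≤ K + 2αcε, and κ/c ≤ κ(Σ') ≤ κ/(1 − 4αcε). -/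
open Matrix Filter
open scoped BigOperators ComplexOrder

/-!
Put `η = 2αcε`, so that `c = 1 + 2η` and `1 - 4αcε = 1 - 2η`. Reading a row of the diagonal
matrix `Σ' - Σ` gives `|σ'ᵢ - σᵢ| ≤ η / κ`, so `K` moves by at most `η`. Every quantity `t` whose
reciprocal enters `κ` (`σᵢ`, `|σᵢ - σⱼ|`, `σᵢ + σⱼ`) satisfies `1 / t ≤ κ` and moves by at most
`2η / κ ≤ 2η t`; hence `t'` lies in `[(1 - 2η) t, (1 + 2η) t]`, which bounds the reciprocals and
therefore `κ` by the factors `1 + 2η` and `(1 - 2η)⁻¹`.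
-/

lemma diagMat_sub (l q : ℕ) (σ τ : Fin q → ℝ) :
    diagMat l q σ - diagMat l q τ = diagMat l q (σ - τ) := by
  ext i j
  simp only [diagMat, Matrix.sub_apply, Pi.sub_apply]
  split_ifs <;> push_cast <;> ring

lemma abs_le_mnorm_diagMat {l q : ℕ} (hlq : q ≤ l) (σ : Fin q → ℝ) (i : Fin q) :
    |σ i| ≤ mnorm (diagMat l q σ) := by
  have hrow : ∑ j, ‖diagMat l q σ (Fin.castLE hlq i) j‖ = |σ i| := by
    rw [Finset.sum_eq_single i]
    · simp [diagMat]
    · intro j _ hji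
      simp [diagMat, Fin.val_ne_of_ne hji.symm]
    · simp
  calc |σ i| = ∑ j, ‖diagMat l q σ (Fin.castLE hlq i) j‖ := hrow.symm
    _ ≤ rowNorm (diagMat l q σ) := Finite.le_ciSup (fun r ↦ ∑ j, ‖diagMat l q σ r j‖) _
    _ ≤ mnorm (diagMat l q σ) := le_max_left _ _

section Kappa

variable {q : ℕ}

lemma one_le_kappa (σ : Fin q → ℝ) : 1 ≤ kappa σ := le_max_left _ _

lemma one_div_le_kappa (σ : Fin q → ℝ) (i : Fin q) : 1 / σ i ≤ kappa σ :=
  (Finite.le_ciSup (fun i ↦ 1 / σ i) i).trans <| (le_max_left _ _).trans (le_max_right _ _)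

lemma one_div_abs_sub_add_one_div_add_le_kappa (σ : Fin q → ℝ) {i j : Fin q} (hij : i ≠ j) :
    1 / |σ i - σ j| + 1 / (σ i + σ j) ≤ kappa σ := by
  let term : Fin q → Fin q → ℝ := fun i j ↦
    if i ≠ j then 1 / |σ i - σ j| + 1 / (σ i + σ j) else 0
  calc 1 / |σ i - σ j| + 1 / (σ i + σ j) = term i j := (if_pos hij).symm
    _ ≤ ⨆ j, term i j := Finite.le_ciSup _ j
    _ ≤ ⨆ i, ⨆ j, term i j := Finite.le_ciSup (fun i ↦ ⨆ j, term i j) i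
    _ ≤ kappa σ := (le_max_right _ _).trans (le_max_right _ _)

lemma one_div_abs_sub_le_kappa {σ : Fin q → ℝ} (hσ : ∀ i, 0 < σ i) {i j : Fin q} (hij : i ≠ j) :
    1 / |σ i - σ j| ≤ kappa σ := by
  have : 0 ≤ 1 / (σ i + σ j) := by have := hσ i; have := hσ j; positivity
  linarith [one_div_abs_sub_add_one_div_add_le_kappa σ hij]

lemma one_div_add_le_kappa (σ : Fin q → ℝ) {i j : Fin q} (hij : i ≠ j) :
    1 / (σ i + σ j) ≤ kappa σ := by
  have : 0 ≤ 1 / |σ i - σ j| := by positivity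
  linarith [one_div_abs_sub_add_one_div_add_le_kappa σ hij]

lemma kappa_le_mul_kappa {σ τ : Fin q → ℝ} {a : ℝ} (ha : 1 ≤ a)
    (hdiag : ∀ i, 1 / σ i ≤ a * (1 / τ i))
    (hpair : ∀ i j, i ≠ j → 1 / |σ i - σ j| + 1 / (σ i + σ j) ≤
      a * (1 / |τ i - τ j| + 1 / (τ i + τ j))) :
    kappa σ ≤ a * kappa τ := by
  have hτ : 1 ≤ kappa τ := one_le_kappa τ
  have hbound : 0 ≤ a * kappa τ := by positivity
  refine max_le (by nlinarith) (max_le (Real.iSup_le (fun i ↦ ?_) hbound)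
    (Real.iSup_le (fun i ↦ Real.iSup_le (fun j ↦ ?_) hbound) hbound))
  · exact (hdiag i).trans (mul_le_mul_of_nonneg_left (one_div_le_kappa τ i) (by linarith))
  · split_ifs with hij
    · exact (hpair i j hij).trans <| mul_le_mul_of_nonneg_left
        (one_div_abs_sub_add_one_div_add_le_kappa τ hij) (by linarith)
    · exact hbound

lemma Kbig_le_Kbig_add {σ τ : Fin q → ℝ} {d : ℝ} (hd : 0 ≤ d) (h : ∀ i, σ i ≤ τ i + d) :
    Kbig σ ≤ Kbig τ + d := by
  have hτ : 1 ≤ Kbig τ := le_max_left _ _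
  refine max_le (by linarith) (Real.iSup_le (fun i ↦ ?_) (by linarith))
  calc σ i ≤ τ i + d := h i
    _ ≤ Kbig τ + d := by
      gcongr; exact (Finite.le_ciSup τ i).trans (le_max_right _ _)

end Kappa

lemma one_div_le_of_abs_sub_le {t t' κ r : ℝ} (hr : 0 ≤ r) (hr1 : r < 1) (ht : 0 < t)
    (htκ : 1 / t ≤ κ) (h : |t' - t| ≤ r / κ) :
    0 < t' ∧ 1 / t ≤ (1 + r) * (1 / t') ∧ 1 / t' ≤ (1 - r)⁻¹ * (1 / t) := by
  have hκ : 0 < κ := (one_div_pos.2 ht).trans_le htκ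
  have hrt : r / κ ≤ r * t := by
    rw [div_le_iff₀ hκ, mul_assoc]
    have : 1 ≤ t * κ := by rwa [div_le_iff₀ ht, mul_comm] at htκ
    nlinarith
  obtain ⟨hlow, hupp⟩ := abs_le.1 (h.trans hrt)
  have ht' : 0 < t' := by nlinarith
  refine ⟨ht', ?_, ?_⟩
  · rw [mul_one_div, div_le_div_iff₀ ht ht']; linarith
  · rw [← one_div, div_mul_div_comm, one_mul]
    exact one_div_le_one_div_of_le (by nlinarith) (by linarith)

theorem kappa_Kbig_stability_of_abs_sub_le {q : ℕ} {σ σ' : Fin q → ℝ} {η : ℝ}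
    (hpos : ∀ i, 0 < σ i) (hdist : ∀ i j, i ≠ j → σ i ≠ σ j) (hη : 0 ≤ η) (hη1 : 2 * η < 1)
    (hclose : ∀ i, |σ' i - σ i| ≤ η / kappa σ) :
    (∀ i, 0 < σ' i) ∧ (∀ i j, i ≠ j → σ' i ≠ σ' j) ∧
    Kbig σ - η ≤ Kbig σ' ∧ Kbig σ' ≤ Kbig σ + η ∧
    kappa σ ≤ (1 + 2 * η) * kappa σ' ∧ kappa σ' ≤ (1 - 2 * η)⁻¹ * kappa σ := by
  have hκ : 1 ≤ kappa σ := one_le_kappa σ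
  have hentry : ∀ i, |σ' i - σ i| ≤ η := fun i ↦
    (hclose i).trans (div_le_self hη hκ)
  have hpair : ∀ i j, |σ' i - σ i| + |σ' j - σ j| ≤ 2 * η / kappa σ := fun i j ↦ by
    rw [two_mul, add_div]; exact add_le_add (hclose i) (hclose j)
  have hsingle i := one_div_le_of_abs_sub_le (by linarith) hη1 (hpos i) (one_div_le_kappa σ i)
    ((hclose i).trans (by gcongr; linarith))
  have hdiff_close i j : |(|σ' i - σ' j| - |σ i - σ j|)| ≤ 2 * η / kappa σ :=
    calc |(|σ' i - σ' j| - |σ i - σ j|)| ≤ |(σ' i - σ i) - (σ' j - σ j)| := by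
          rw [sub_sub_sub_comm]; exact abs_abs_sub_abs_le_abs_sub _ _
      _ ≤ 2 * η / kappa σ := (abs_sub _ _).trans (hpair i j)
  have hsum_close i j : |(σ' i + σ' j) - (σ i + σ j)| ≤ 2 * η / kappa σ :=
    calc |(σ' i + σ' j) - (σ i + σ j)| = |(σ' i - σ i) + (σ' j - σ j)| := by ring_nf
      _ ≤ 2 * η / kappa σ := (abs_add_le _ _).trans (hpair i j)
  have hdiff i j (hij : i ≠ j) := one_div_le_of_abs_sub_le (by linarith) hη1
    (abs_pos.2 (sub_ne_zero.2 (hdist i j hij))) (one_div_abs_sub_le_kappa hpos hij)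
    (hdiff_close i j)
  have hsum i j (hij : i ≠ j) := one_div_le_of_abs_sub_le (by linarith) hη1
    (add_pos (hpos i) (hpos j)) (one_div_add_le_kappa σ hij) (hsum_close i j)
  refine ⟨fun i ↦ (hsingle i).1, fun i j hij ↦ sub_ne_zero.1 (abs_pos.1 (hdiff i j hij).1),
    ?_, ?_, ?_, ?_⟩
  · exact sub_le_iff_le_add.2 <| Kbig_le_Kbig_add hη fun i ↦ by linarith [abs_le.1 (hentry i)]
  · exact Kbig_le_Kbig_add hη fun i ↦ by linarith [abs_le.1 (hentry i)]
  · refine kappa_le_mul_kappa (by linarith) (fun i ↦ (hsingle i).2.1) fun i j hij ↦ ?_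
    rw [mul_add]; exact add_le_add (hdiff i j hij).2.1 (hsum i j hij).2.1
  · refine kappa_le_mul_kappa (one_le_inv₀ (by linarith) |>.2 (by linarith))
      (fun i ↦ (hsingle i).2.2) fun i j hij ↦ ?_
    rw [mul_add]; exact add_le_add (hdiff i j hij).2.2 (hsum i j hij).2.2

/-- Lemma 5.3: stability of `K` and `κ` under a diagonal perturbation. -/
theorem kappa_K_stability {l q : ℕ} (hlq : q ≤ l) (σ σ' : Fin q → ℝ)
    (hpos : ∀ i, 0 < σ i) (hdist : ∀ i j, i ≠ j → σ i ≠ σ j)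
    (α ε : ℝ) (hα : 0 ≤ α) (hε : 0 ≤ ε) (h8 : 0 < 1 - 8 * α * ε)
    (c : ℝ) (hc : c = 1 / (1 - 4 * α * ε))
    (hclose : mnorm (diagMat l q σ' - diagMat l q σ) ≤ 2 * α * c * ε / kappa σ) :
    (∀ i, 0 < σ' i) ∧ (∀ i j, i ≠ j → σ' i ≠ σ' j) ∧
    Kbig σ - 2 * α * c * ε ≤ Kbig σ' ∧ Kbig σ' ≤ Kbig σ + 2 * α * c * ε ∧
    kappa σ / c ≤ kappa σ' ∧ kappa σ' ≤ kappa σ / (1 - 4 * α * c * ε) := by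
  have h4 : 0 < 1 - 4 * α * ε := by nlinarith [mul_nonneg hα hε]
  have hc_mul : c * (1 - 4 * α * ε) = 1 := by rw [hc]; field_simp
  have hc0 : 0 < c := by rw [hc]; positivity
  have hc2 : c < 2 := by rw [hc, div_lt_iff₀ h4]; linarith
  set η := 2 * α * c * ε
  have hcη : c = 1 + 2 * η := by linear_combination hc_mul
  have h4cε : 4 * α * c * ε = 2 * η := by ring
  rw [diagMat_sub] at hclose
  have hentry i : |σ' i - σ i| ≤ η / kappa σ := (abs_le_mnorm_diagMat hlq (σ' - σ) i).trans hclose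
  obtain ⟨hpos', hdist', hK_low, hK_upp, hκ_low, hκ_upp⟩ :=
    kappa_Kbig_stability_of_abs_sub_le hpos hdist (by positivity) (by linarith) hentry
  refine ⟨hpos', hdist', hK_low, hK_upp, ?_, ?_⟩
  · rw [div_le_iff₀ hc0, mul_comm, hcη]; exact hκ_low
  · rwa [h4cε, div_eq_inv_mul]
end

section
/- Define a₁(u) = 1/(1+√(1−u²)), a₂(u) = (a₁(u) − 1/2)/u², b₁(u) = u²a₁(u)²/√(1−u²) + 2a₁(u), and b₂(u) = a₁(u)²/√(1−u²) + 2a₂(u). Then for all real x, y with 0 ≤ y ≤ x and x + y < 1, and for i ∈ {1, 2}: (x+y)^{2i}·a_i(x+y) − x^{2i}·a_i(x) − y^{2i}·a_i(y) ≤ b_i(x+y)·x·y·(x+y)^{2i−2}. -/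
open scoped BigOperators

/-- `a₁(u) = 1/(1+√(1−u²))`. -/
noncomputable def a1 (u : ℝ) : ℝ := 1 / (1 + Real.sqrt (1 - u ^ 2))

/-- `a₂(u) = (a₁(u) − 1/2)/u²`. -/
noncomputable def a2 (u : ℝ) : ℝ := (a1 u - 1 / 2) / u ^ 2

/-- `b₁(u) = u²a₁(u)²/√(1−u²) + 2a₁(u)`. -/
noncomputable def b1 (u : ℝ) : ℝ := u ^ 2 * a1 u ^ 2 / Real.sqrt (1 - u ^ 2) + 2 * a1 u

/-- `b₂(u) = a₁(u)²/√(1−u²) + 2a₂(u)`. -/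
noncomputable def b2 (u : ℝ) : ℝ := a1 u ^ 2 / Real.sqrt (1 - u ^ 2) + 2 * a2 u

/-- `c_k = (−1)^{k+1}(2k)!/(4^k (k!)² (2k−1))`, the Taylor coefficients of `√(1+u²)−1`. -/
noncomputable def ck (k : ℕ) : ℝ :=
  (-1 : ℝ) ^ (k + 1) * (Nat.factorial (2 * k) : ℝ) /
    ((4 : ℝ) ^ k * ((Nat.factorial k : ℝ)) ^ 2 * ((2 * k - 1 : ℕ) : ℝ))

/-!
Rationalising, `u² a₁(u) = 1 − √(1−u²)` and `b₁(u) = 1/√(1−u²)`; moreover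
`u² a₂(u) = a₁(u) − 1/2` and `u² b₂(u) = b₁(u) − 1`, so the case `i = 2` is the case `i = 1`
minus `xy` on both sides. With `A = √(1−x²)`, `B = √(1−y²)`, `C = √(1−(x+y)²)` the case `i = 1`
reads `C (A + B − 1) ≤ C² + xy`. Both sides are nonnegative, and the difference of their squares
is `(1−A)(1−B)((1+A)(1+B) − 2C²)`, which is nonnegative because `C ≤ A, B ≤ 1`.
-/

open Real

theorem sq_mul_a1 {u : ℝ} (hu : u ^ 2 ≤ 1) : u ^ 2 * a1 u = 1 - √(1 - u ^ 2) := by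
  have hsq : √(1 - u ^ 2) ^ 2 = 1 - u ^ 2 := sq_sqrt (by linarith)
  have hpos : 0 < 1 + √(1 - u ^ 2) := by positivity
  rw [a1]
  field_simp
  linear_combination hsq

theorem sq_mul_a2 (u : ℝ) : u ^ 2 * a2 u = a1 u - 1 / 2 := by
  rcases eq_or_ne u 0 with rfl | hu
  · norm_num [a1]
  · rw [a2]
    field_simp

theorem b1_eq_inv_sqrt {u : ℝ} (hu : u ^ 2 < 1) : b1 u = (√(1 - u ^ 2))⁻¹ := by
  have hsq : √(1 - u ^ 2) ^ 2 = 1 - u ^ 2 := sq_sqrt (by linarith)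
  have hpos : 0 < √(1 - u ^ 2) := sqrt_pos.2 (by linarith)
  rw [b1, a1]
  field_simp
  linear_combination hsq

theorem sq_mul_b2 (u : ℝ) : u ^ 2 * b2 u = b1 u - 1 := by
  rw [b2, b1, mul_add, mul_left_comm, sq_mul_a2]
  ring

theorem sqrt_mul_sqrt_add_sqrt_sub_one_le {x y : ℝ} (hx : 0 ≤ x) (hy : 0 ≤ y)
    (h : x + y < 1) :
    √(1 - (x + y) ^ 2) * (√(1 - x ^ 2) + √(1 - y ^ 2) - 1) ≤ 1 - (x + y) ^ 2 + x * y := by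
  set A := √(1 - x ^ 2)
  set B := √(1 - y ^ 2)
  set C := √(1 - (x + y) ^ 2)
  have hA2 : A ^ 2 = 1 - x ^ 2 := sq_sqrt (by nlinarith)
  have hB2 : B ^ 2 = 1 - y ^ 2 := sq_sqrt (by nlinarith)
  have hC2 : C ^ 2 = 1 - (x + y) ^ 2 := sq_sqrt (by nlinarith)
  have hA1 : A ≤ 1 := sqrt_le_one.2 (by nlinarith)
  have hB1 : B ≤ 1 := sqrt_le_one.2 (by nlinarith)
  have hCA : C ≤ A := sqrt_le_sqrt (by nlinarith)
  have hCB : C ≤ B := sqrt_le_sqrt (by nlinarith)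
  have hC0 : 0 ≤ C := sqrt_nonneg _
  have hAB : 1 ≤ A + B := by nlinarith [sqrt_nonneg (1 - x ^ 2), sqrt_nonneg (1 - y ^ 2)]
  have hfactor : 0 ≤ (1 - A) * (1 - B) * ((1 + A) * (1 + B) - 2 * C ^ 2) :=
    mul_nonneg (mul_nonneg (by linarith) (by linarith)) (by nlinarith)
  rw [← hC2]
  refine (pow_le_pow_iff_left₀ (by nlinarith) (by positivity) two_ne_zero).1 ?_
  linear_combination hfactor - C ^ 2 * hC2 - (1 - C ^ 2 - B ^ 2) * hA2 - (x ^ 2 - C ^ 2) * hB2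

theorem sq_mul_a1_add_sub_le {x y : ℝ} (hx : 0 ≤ x) (hy : 0 ≤ y) (h : x + y < 1) :
    (x + y) ^ 2 * a1 (x + y) - x ^ 2 * a1 x - y ^ 2 * a1 y ≤ b1 (x + y) * x * y := by
  have hC : 0 < √(1 - (x + y) ^ 2) := sqrt_pos.2 (by nlinarith)
  rw [sq_mul_a1 (by nlinarith), sq_mul_a1 (by nlinarith), sq_mul_a1 (by nlinarith),
    b1_eq_inv_sqrt (by nlinarith), inv_mul_eq_div, div_mul_eq_mul_div, le_div_iff₀ hC]
  have hC2 : √(1 - (x + y) ^ 2) ^ 2 = 1 - (x + y) ^ 2 := sq_sqrt (by nlinarith)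
  linarith [sqrt_mul_sqrt_add_sqrt_sub_one_le hx hy h]

theorem pow_four_mul_a2_add_sub_le {x y : ℝ} (hx : 0 ≤ x) (hy : 0 ≤ y) (h : x + y < 1) :
    (x + y) ^ 4 * a2 (x + y) - x ^ 4 * a2 x - y ^ 4 * a2 y ≤
      b2 (x + y) * x * y * (x + y) ^ 2 := by
  have h4 (u : ℝ) : u ^ 4 * a2 u = u ^ 2 * a1 u - u ^ 2 / 2 := by
    linear_combination u ^ 2 * sq_mul_a2 u
  have hb : b2 (x + y) * x * y * (x + y) ^ 2 = b1 (x + y) * x * y - x * y := by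
    linear_combination x * y * sq_mul_b2 (x + y)
  rw [h4, h4, h4, hb]
  linarith [sq_mul_a1_add_sub_le hx hy h]

/-- Lemma 8.3: subadditivity-type estimate for `u^{2i} a_i(u)`, `i ∈ {1,2}`. -/
theorem ai_two_variable_bound (x y : ℝ) (hy0 : 0 ≤ y) (hyx : y ≤ x) (hxy : x + y < 1) :
    ((x + y) ^ 2 * a1 (x + y) - x ^ 2 * a1 x - y ^ 2 * a1 y ≤ b1 (x + y) * x * y) ∧
    ((x + y) ^ 4 * a2 (x + y) - x ^ 4 * a2 x - y ^ 4 * a2 y ≤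
      b2 (x + y) * x * y * (x + y) ^ 2) := by
  have hx0 : 0 ≤ x := hy0.trans hyx
  exact ⟨sq_mul_a1_add_sub_le hx0 hy0 hxy, pow_four_mul_a2_add_sub_le hx0 hy0 hxy⟩
end
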